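/- The sequence of second derivatives (φₙ″) converges uniformly on [0, ε*]; consequently the uniform limit φ of (φₙ) is twice continuously differentiable on [0, ε*] and φ″ is the uniform limit of (φₙ″). -/

import Mathlib

/-!
Write `r = (1 + δ) a < 1`, so that the orbit `yₙ = f⁽ⁿ⁾(x)` stays in `[0, ε*]` with
`yₙ ≤ rⁿ ε*`, and `|f′(y) - a| ≤ C y` by the mean value inequality. The iterates `f⁽ⁿ⁾(x)` and the
chain-rule values of `(f⁽ⁿ⁾)′(x)` and `(f⁽ⁿ⁾)″(x)` all satisfy recursions `vₙ₊₁ = vₙ eₙ + wₙ` with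
`|eₙ - a| = O(rⁿ)` and `|wₙ| ≤ aⁿ⁺¹ βₙ` for a summable `β`: for the iterates `wₙ = f(yₙ) - a yₙ`
is `O(r²ⁿ)`, and `r² < a` is exactly `a (1 + δ)² < 1`; for the second derivatives
`wₙ = f″(yₙ) ((f⁽ⁿ⁾)′(x))² = O(a²ⁿ)`. The discrete Grönwall inequality bounds `vₙ / aⁿ`
uniformly, so the increments of `vₙ / aⁿ` are uniformly summable and all three rescaled sequences
converge uniformly. On a compact interval, uniform convergence of derivatives passes to the limit
through the fundamental theorem of calculus, which makes `φ` twice differentiable with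
`φ″ = lim φₙ″`.
-/

open Set Filter Topology Finset intervalIntegral

theorem exists_tendstoUniformlyOn_of_summable {α F : Type*} [NormedAddCommGroup F]
    [CompleteSpace F] {u : ℕ → α → F} {s : Set α} {v : ℕ → ℝ} (hv : Summable v)
    (h : ∀ n, ∀ x ∈ s, ‖u (n + 1) x - u n x‖ ≤ v n) :
    ∃ g : α → F, TendstoUniformlyOn u g atTop s := by
  refine ⟨fun x => (∑' n, (u (n + 1) x - u n x)) + u 0 x, ?_⟩
  have hsum := tendstoUniformlyOn_tsum_nat hv (f := fun n x => u (n + 1) x - u n x) h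
  rw [Metric.tendstoUniformlyOn_iff] at hsum ⊢
  intro ε hε
  filter_upwards [hsum ε hε] with N hN x hx
  simpa [sum_range_sub (fun n => u n x), dist_add_left] using hN x hx

section RescaledRecursion

theorem abs_div_pow_succ_sub_le {a v v' e w ε β : ℝ} (n : ℕ) (ha : 0 < a)
    (hv : v' = v * e + w) (he : |e - a| ≤ ε) (hw : |w| ≤ a ^ (n + 1) * β) :
    |v' / a ^ (n + 1) - v / a ^ n| ≤ |v / a ^ n| * (ε / a) + β := by
  have hsplit : v' / a ^ (n + 1) - v / a ^ n =
      v / a ^ n * ((e - a) / a) + w / a ^ (n + 1) := by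
    rw [hv]
    field_simp
    ring
  rw [hsplit]
  refine (abs_add_le _ _).trans (add_le_add ?_ ?_)
  · rw [abs_mul, abs_div (e - a), abs_of_pos ha]
    gcongr
  · rw [abs_div, abs_of_pos (pow_pos ha _), div_le_iff₀' (pow_pos ha _)]
    exact hw

variable {a κ r : ℝ}

theorem abs_div_pow_le_of_recursion {v e w β : ℕ → ℝ} (ha : 0 < a) (hκ : 0 ≤ κ) (hr0 : 0 ≤ r)
    (hr1 : r < 1) (hv : ∀ n, v (n + 1) = v n * e n + w n) (he : ∀ n, |e n - a| ≤ κ * r ^ n)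
    (hw : ∀ n, |w n| ≤ a ^ (n + 1) * β n) (hβ : Summable β) (n : ℕ) :
    |v n / a ^ n| ≤ (|v 0| + ∑' k, β k) * Real.exp (κ / a / (1 - r)) := by
  have hβ0 (k : ℕ) : 0 ≤ β k :=
    nonneg_of_mul_nonneg_right ((abs_nonneg _).trans (hw k)) (pow_pos ha _)
  have hstep (k : ℕ) :
      |v (k + 1) / a ^ (k + 1)| ≤ (1 + κ / a * r ^ k) * |v k / a ^ k| + β k := by
    have := abs_div_pow_succ_sub_le k ha (hv k) (he k) (hw k)
    rw [mul_div_right_comm] at this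
    linarith [abs_sub_abs_le_abs_sub (v (k + 1) / a ^ (k + 1)) (v k / a ^ k)]
  have hsum : ∑ k ∈ Ico 0 n, κ / a * r ^ k ≤ κ / a / (1 - r) := by
    rw [← mul_sum, div_eq_mul_one_div (κ / a), ← pow_zero r]
    exact mul_le_mul_of_nonneg_left (geom_sum_Ico_le_of_lt_one hr0 hr1) (by positivity)
  calc |v n / a ^ n|
      ≤ (|v 0 / a ^ 0| + ∑ k ∈ Ico 0 n, β k) * Real.exp (∑ k ∈ Ico 0 n, κ / a * r ^ k) :=
        discrete_gronwall (u := fun k => |v k / a ^ k|) (c := fun k => κ / a * r ^ k)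
          (abs_nonneg _) (fun k _ => hstep k) (fun k _ => by positivity) (fun k _ => hβ0 k)
          n.zero_le
    _ ≤ (|v 0| + ∑' k, β k) * Real.exp (κ / a / (1 - r)) := by
        rw [pow_zero, div_one]
        gcongr ?_ * Real.exp ?_
        · exact add_nonneg (abs_nonneg _) (tsum_nonneg hβ0)
        · exact add_le_add_right (hβ.sum_le_tsum _ fun k _ => hβ0 k) _

theorem exists_tendstoUniformlyOn_div_pow_of_recursion {α : Type*} {s : Set α}
    {v e w : ℕ → α → ℝ} {β : ℕ → ℝ} {M : ℝ} (ha : 0 < a) (hκ : 0 ≤ κ) (hr0 : 0 ≤ r)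
    (hr1 : r < 1) (hv : ∀ n, ∀ x ∈ s, v (n + 1) x = v n x * e n x + w n x)
    (he : ∀ n, ∀ x ∈ s, |e n x - a| ≤ κ * r ^ n)
    (hw : ∀ n, ∀ x ∈ s, |w n x| ≤ a ^ (n + 1) * β n) (hβ : Summable β)
    (hv0 : ∀ x ∈ s, |v 0 x| ≤ M) :
    ∃ g : α → ℝ, TendstoUniformlyOn (fun n x => v n x / a ^ n) g atTop s := by
  set K := (M + ∑' k, β k) * Real.exp (κ / a / (1 - r))
  refine exists_tendstoUniformlyOn_of_summable
    (((summable_geometric_of_lt_one hr0 hr1).mul_left (K * (κ / a))).add hβ) fun n x hx => ?_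
  have hbound := abs_div_pow_le_of_recursion (v := fun k => v k x) ha hκ hr0 hr1
    (fun k => hv k x hx) (fun k => he k x hx) (fun k => hw k x hx) hβ n
  calc ‖v (n + 1) x / a ^ (n + 1) - v n x / a ^ n‖
      ≤ |v n x / a ^ n| * (κ * r ^ n / a) + β n :=
        abs_div_pow_succ_sub_le n ha (hv n x hx) (he n x hx) (hw n x hx)
    _ ≤ K * (κ / a) * r ^ n + β n := by
        rw [mul_div_right_comm, ← mul_assoc]
        gcongr
        exact hbound.trans (mul_le_mul_of_nonneg_right (by linarith [hv0 x hx]) (by positivity))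

end RescaledRecursion

section SecondDerivative

variable {𝕜 E : Type*} [NontriviallyNormedField 𝕜] [NormedAddCommGroup E] [NormedSpace 𝕜 E]
  {f f' f'' : 𝕜 → E} {s : Set 𝕜}

theorem derivWithin_derivWithin_eq_of_hasDerivWithinAt (hs : UniqueDiffOn 𝕜 s)
    (hf : ∀ y ∈ s, HasDerivWithinAt f (f' y) s y)
    (hf' : ∀ y ∈ s, HasDerivWithinAt f' (f'' y) s y) {x : 𝕜} (hx : x ∈ s) :
    derivWithin (derivWithin f s) s x = f'' x := by
  have hEq : EqOn (derivWithin f s) f' s := fun y hy => (hf y hy).derivWithin (hs y hy)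
  rw [derivWithin_congr hEq (hEq hx)]
  exact (hf' x hx).derivWithin (hs x hx)

theorem contDiffOn_two_of_hasDerivWithinAt (hs : UniqueDiffOn 𝕜 s)
    (hf : ∀ y ∈ s, HasDerivWithinAt f (f' y) s y)
    (hf' : ∀ y ∈ s, HasDerivWithinAt f' (f'' y) s y) (hf'' : ContinuousOn f'' s) :
    ContDiffOn 𝕜 2 f s := by
  have hf'1 : ContDiffOn 𝕜 1 f' s :=
    (contDiffOn_one_iff_derivWithin hs).2 ⟨fun y hy => (hf' y hy).differentiableWithinAt,
      hf''.congr fun y hy => (hf' y hy).derivWithin (hs y hy)⟩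
  rw [show (2 : WithTop ℕ∞) = 1 + 1 from rfl, contDiffOn_succ_iff_derivWithin hs]
  exact ⟨fun y hy => (hf y hy).differentiableWithinAt, by simp,
    hf'1.congr fun y hy => (hf y hy).derivWithin (hs y hy)⟩

end SecondDerivative

section UniformLimit

variable {E : Type*} [NormedAddCommGroup E] [NormedSpace ℝ E] [CompleteSpace E]
  {a b : ℝ} {u du ddu : ℕ → ℝ → E} {g dg ddg : ℝ → E}

theorem hasDerivWithinAt_Icc_of_tendstoUniformlyOn
    (hderiv : ∀ n, ∀ x ∈ Icc a b, HasDerivWithinAt (u n) (du n x) (Icc a b) x)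
    (hdu : ∀ n, ContinuousOn (du n) (Icc a b))
    (hu : ∀ x ∈ Icc a b, Tendsto (fun n => u n x) atTop (𝓝 (g x)))
    (hdg : TendstoUniformlyOn du dg atTop (Icc a b)) {x : ℝ} (hx : x ∈ Icc a b) :
    HasDerivWithinAt g (dg x) (Icc a b) x := by
  have hdgc : ContinuousOn dg (Icc a b) := hdg.continuousOn (.of_forall hdu)
  have hsub : ∀ y ∈ Icc a b, uIcc a y ⊆ Icc a b := fun y hy =>
    uIcc_of_le hy.1 ▸ Icc_subset_Icc le_rfl hy.2
  have hg : ∀ y ∈ Icc a b, g y = g a + ∫ t in a..y, dg t := by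
    intro y hy
    have hftc : ∀ n, ∫ t in a..y, du n t = u n y - u n a := fun n =>
      integral_eq_sub_of_hasDeriv_right_of_le hy.1
        (fun t ht => (hderiv n t (hsub y hy (Icc_subset_uIcc ht))).continuousWithinAt.mono
          (Icc_subset_uIcc.trans (hsub y hy)))
        (fun t ht => ((hderiv n t ⟨ht.1.le, ht.2.le.trans hy.2⟩).hasDerivAt
          (Icc_mem_nhds ht.1 (ht.2.trans_le hy.2))).hasDerivWithinAt)
        (((hdu n).mono (hsub y hy)).intervalIntegrable)
    have hlim := (hdg.mono (hsub y hy)).tendsto_intervalIntegral_of_continuousOn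
      (μ := MeasureTheory.volume) (.of_forall fun n => (hdu n).mono (hsub y hy))
    simp only [hftc] at hlim
    rw [← tendsto_nhds_unique ((hu y hy).sub (hu a ⟨le_rfl, hy.1.trans hy.2⟩)) hlim,
      add_sub_cancel]
  have : Fact (x ∈ Icc a b) := ⟨hx⟩
  have hint : HasDerivWithinAt (fun y => g a + ∫ t in a..y, dg t) (dg x) (Icc a b) x :=
    (integral_hasDerivWithinAt_right ((hdgc.mono (hsub x hx)).intervalIntegrable)
      (hdgc.stronglyMeasurableAtFilter_nhdsWithin measurableSet_Icc x)
      (hdgc x hx)).const_add _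
  exact hint.congr hg (hg x hx)

theorem contDiffOn_two_and_derivWithin_derivWithin_eq_of_tendstoUniformlyOn (hab : a < b)
    (hu' : ∀ n, ∀ x ∈ Icc a b, HasDerivWithinAt (u n) (du n x) (Icc a b) x)
    (hdu' : ∀ n, ∀ x ∈ Icc a b, HasDerivWithinAt (du n) (ddu n x) (Icc a b) x)
    (hddu : ∀ n, ContinuousOn (ddu n) (Icc a b))
    (hu : ∀ x ∈ Icc a b, Tendsto (fun n => u n x) atTop (𝓝 (g x)))
    (hdu : TendstoUniformlyOn du dg atTop (Icc a b))
    (hddu' : TendstoUniformlyOn ddu ddg atTop (Icc a b)) :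
    ContDiffOn ℝ 2 g (Icc a b) ∧
      ∀ x ∈ Icc a b, derivWithin (derivWithin g (Icc a b)) (Icc a b) x = ddg x := by
  have hg (x : ℝ) (hx : x ∈ Icc a b) := hasDerivWithinAt_Icc_of_tendstoUniformlyOn hu'
    (fun n y hy => (hdu' n y hy).continuousWithinAt) hu hdu hx
  have hdg (x : ℝ) (hx : x ∈ Icc a b) := hasDerivWithinAt_Icc_of_tendstoUniformlyOn hdu' hddu
    (fun y hy => hdu.tendsto_at hy) hddu' hx
  exact ⟨contDiffOn_two_of_hasDerivWithinAt (uniqueDiffOn_Icc hab) hg hdg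
      (hddu'.continuousOn (.of_forall hddu)),
    fun x hx => derivWithin_derivWithin_eq_of_hasDerivWithinAt (uniqueDiffOn_Icc hab) hg hdg hx⟩

end UniformLimit

section IterateDeriv

variable {𝕜 : Type*} [NontriviallyNormedField 𝕜] {f f' f'' : 𝕜 → 𝕜} {s : Set 𝕜}

def iterateDeriv (f f' : 𝕜 → 𝕜) : ℕ → 𝕜 → 𝕜
  | 0, _ => 1
  | n + 1, x => iterateDeriv f f' n x * f' (f^[n] x)

def iterateDeriv2 (f f' f'' : 𝕜 → 𝕜) : ℕ → 𝕜 → 𝕜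
  | 0, _ => 0
  | n + 1, x =>
    iterateDeriv2 f f' f'' n x * f' (f^[n] x) + f'' (f^[n] x) * iterateDeriv f f' n x ^ 2

theorem hasDerivWithinAt_iterate_of_mapsTo (hmaps : MapsTo f s s)
    (hf : ∀ y ∈ s, HasDerivWithinAt f (f' y) s y) (n : ℕ) {x : 𝕜} (hx : x ∈ s) :
    HasDerivWithinAt f^[n] (iterateDeriv f f' n x) s x := by
  induction n with
  | zero => simpa [iterateDeriv] using hasDerivWithinAt_id x s
  | succ n ih =>
    rw [Function.iterate_succ', iterateDeriv, mul_comm]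
    exact (hf _ (hmaps.iterate n hx)).comp x ih (hmaps.iterate n)

theorem hasDerivWithinAt_iterateDeriv (hmaps : MapsTo f s s)
    (hf : ∀ y ∈ s, HasDerivWithinAt f (f' y) s y)
    (hf' : ∀ y ∈ s, HasDerivWithinAt f' (f'' y) s y) (n : ℕ) {x : 𝕜} (hx : x ∈ s) :
    HasDerivWithinAt (iterateDeriv f f' n) (iterateDeriv2 f f' f'' n x) s x := by
  induction n with
  | zero => exact hasDerivWithinAt_const x s 1
  | succ n ih =>
    have hcomp : HasDerivWithinAt (fun y => f' (f^[n] y))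
        (f'' (f^[n] x) * iterateDeriv f f' n x) s x :=
      (hf' _ (hmaps.iterate n hx)).comp x
        (hasDerivWithinAt_iterate_of_mapsTo hmaps hf n hx) (hmaps.iterate n)
    exact (ih.mul hcomp).congr_deriv (by simp only [iterateDeriv2]; ring)

theorem continuousOn_iterateDeriv (hmaps : MapsTo f s s) (hf : ContinuousOn f s)
    (hf' : ContinuousOn f' s) (n : ℕ) : ContinuousOn (iterateDeriv f f' n) s := by
  induction n with
  | zero => exact continuousOn_const
  | succ n ih => exact ih.mul (hf'.comp (hf.iterate hmaps n) (hmaps.iterate n))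

theorem continuousOn_iterateDeriv2 (hmaps : MapsTo f s s) (hf : ContinuousOn f s)
    (hf' : ContinuousOn f' s) (hf'' : ContinuousOn f'' s) (n : ℕ) :
    ContinuousOn (iterateDeriv2 f f' f'' n) s := by
  induction n with
  | zero => exact continuousOn_const
  | succ n ih =>
    have hfn := hf.iterate hmaps n
    exact (ih.mul (hf'.comp hfn (hmaps.iterate n))).add ((hf''.comp hfn (hmaps.iterate n)).mul
      ((continuousOn_iterateDeriv hmaps hf hf' n).pow 2))

end IterateDeriv

section Orbit

variable {f : ℝ → ℝ} {a r C ε : ℝ}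

theorem mapsTo_Icc_of_le_mul (hr : r ≤ 1) (hf : ∀ x ∈ Icc 0 ε, 0 ≤ f x ∧ f x ≤ r * x) :
    MapsTo f (Icc 0 ε) (Icc 0 ε) := fun x hx =>
  ⟨(hf x hx).1, (hf x hx).2.trans (by nlinarith [hx.1, hx.2])⟩

theorem iterate_le_pow_mul (hr0 : 0 ≤ r) (hr1 : r ≤ 1)
    (hf : ∀ x ∈ Icc 0 ε, 0 ≤ f x ∧ f x ≤ r * x) (n : ℕ) {x : ℝ} (hx : x ∈ Icc 0 ε) :
    f^[n] x ≤ r ^ n * x := by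
  induction n with
  | zero => simp
  | succ n ih =>
    rw [Function.iterate_succ_apply', pow_succ]
    calc f (f^[n] x) ≤ r * f^[n] x := (hf _ ((mapsTo_Icc_of_le_mul hr1 hf).iterate n hx)).2
      _ ≤ r * (r ^ n * x) := by gcongr
      _ = r ^ n * r * x := by ring

theorem abs_apply_iterate_sub_le {g : ℝ → ℝ} (hC : 0 ≤ C) (hr0 : 0 ≤ r) (hr1 : r ≤ 1)
    (hf : ∀ x ∈ Icc 0 ε, 0 ≤ f x ∧ f x ≤ r * x) (hg : DifferentiableOn ℝ g (Icc 0 ε))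
    (hg' : ∀ x ∈ Icc 0 ε, |derivWithin g (Icc 0 ε) x| ≤ C) (hg0 : g 0 = a) (n : ℕ) {x : ℝ}
    (hx : x ∈ Icc 0 ε) : |g (f^[n] x) - a| ≤ C * ε * r ^ n := by
  have hxn := (mapsTo_Icc_of_le_mul hr1 hf).iterate n hx
  have hmvt := (convex_Icc 0 ε).norm_image_sub_le_of_norm_derivWithin_le hg hg'
    ⟨le_rfl, hx.1.trans hx.2⟩ hxn
  rw [hg0, Real.norm_eq_abs, Real.norm_eq_abs, sub_zero, abs_of_nonneg hxn.1] at hmvt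
  calc |g (f^[n] x) - a| ≤ C * f^[n] x := hmvt
    _ ≤ C * (r ^ n * ε) := by
        gcongr
        exact (iterate_le_pow_mul hr0 hr1 hf n hx).trans (by gcongr; exact hx.2)
    _ = C * ε * r ^ n := by ring

theorem exists_tendstoUniformlyOn_iterate_div_pow (ha : 0 < a) (hC : 0 ≤ C) (hr0 : 0 ≤ r)
    (hr1 : r ≤ 1) (hr : r ^ 2 < a) (hf1 : ∀ x ∈ Icc 0 ε, 0 ≤ f x ∧ f x ≤ r * x)
    (hf2 : ∀ x ∈ Icc 0 ε, |f x - a * x| ≤ C * x ^ 2) :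
    ∃ φ : ℝ → ℝ, TendstoUniformlyOn (fun n x => f^[n] x / a ^ n) φ atTop (Icc 0 ε) := by
  have hq0 : 0 ≤ r ^ 2 / a := by positivity
  have hq1 : r ^ 2 / a < 1 := (div_lt_one ha).2 hr
  refine exists_tendstoUniformlyOn_div_pow_of_recursion (e := fun _ _ => a) (κ := 0) (r := 0)
    (w := fun n x => f (f^[n] x) - a * f^[n] x) (β := fun n => C * ε ^ 2 / a * (r ^ 2 / a) ^ n)
    (M := ε) ha le_rfl le_rfl zero_lt_one (fun n x _ => ?_) (fun n x _ => by simp)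
    (fun n x hx => ?_) ((summable_geometric_of_lt_one hq0 hq1).mul_left _)
    (fun x hx => (abs_of_nonneg hx.1).trans_le hx.2)
  · rw [Function.iterate_succ_apply']
    ring
  · have hxn := (mapsTo_Icc_of_le_mul hr1 hf1).iterate n hx
    calc |f (f^[n] x) - a * f^[n] x| ≤ C * (f^[n] x) ^ 2 := hf2 _ hxn
      _ ≤ C * (r ^ n * ε) ^ 2 := by
          gcongr
          · exact hxn.1
          · exact (iterate_le_pow_mul hr0 hr1 hf1 n hx).trans (by gcongr; exact hx.2)
      _ = a ^ (n + 1) * (C * ε ^ 2 / a * (r ^ 2 / a) ^ n) := by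
          rw [div_pow]
          field_simp
          ring

end Orbit

section RescaledIterateDeriv

variable {s : Set ℝ} {f f' f'' : ℝ → ℝ} {a κ r C : ℝ}

theorem abs_iterateDeriv_div_pow_le (ha : 0 < a) (hκ : 0 ≤ κ) (hr0 : 0 ≤ r) (hr1 : r < 1)
    {x : ℝ} (he : ∀ n, |f' (f^[n] x) - a| ≤ κ * r ^ n) (n : ℕ) :
    |iterateDeriv f f' n x / a ^ n| ≤ Real.exp (κ / a / (1 - r)) := by
  simpa [iterateDeriv] using abs_div_pow_le_of_recursion (v := fun n => iterateDeriv f f' n x)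
    (w := 0) (β := 0) ha hκ hr0 hr1 (fun n => by simp [iterateDeriv]) he (by simp)
    summable_zero n

theorem exists_tendstoUniformlyOn_iterateDeriv_div_pow (ha : 0 < a) (hκ : 0 ≤ κ)
    (hr0 : 0 ≤ r) (hr1 : r < 1) (he : ∀ n, ∀ x ∈ s, |f' (f^[n] x) - a| ≤ κ * r ^ n) :
    ∃ χ : ℝ → ℝ, TendstoUniformlyOn (fun n x => iterateDeriv f f' n x / a ^ n) χ atTop s :=
  exists_tendstoUniformlyOn_div_pow_of_recursion (w := 0) (β := 0) (M := 1) ha hκ hr0 hr1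
    (fun n x _ => by simp [iterateDeriv]) he (by simp) summable_zero (by simp [iterateDeriv])

theorem exists_tendstoUniformlyOn_iterateDeriv2_div_pow (ha : 0 < a) (ha1 : a < 1)
    (hκ : 0 ≤ κ) (hr0 : 0 ≤ r) (hr1 : r < 1) (hC : 0 ≤ C)
    (he : ∀ n, ∀ x ∈ s, |f' (f^[n] x) - a| ≤ κ * r ^ n)
    (hf'' : ∀ n, ∀ x ∈ s, |f'' (f^[n] x)| ≤ C) :
    ∃ ψ : ℝ → ℝ,
      TendstoUniformlyOn (fun n x => iterateDeriv2 f f' f'' n x / a ^ n) ψ atTop s := by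
  set K := Real.exp (κ / a / (1 - r))
  refine exists_tendstoUniformlyOn_div_pow_of_recursion
    (w := fun n x => f'' (f^[n] x) * iterateDeriv f f' n x ^ 2)
    (β := fun n => C * K ^ 2 / a * a ^ n) (M := 0) ha hκ hr0 hr1 (fun n x _ => rfl) he
    (fun n x hx => ?_) ((summable_geometric_of_lt_one ha.le ha1).mul_left _)
    (by simp [iterateDeriv2])
  have hP : |iterateDeriv f f' n x| ≤ K * a ^ n := by
    have := abs_iterateDeriv_div_pow_le ha hκ hr0 hr1 (fun k => he k x hx) n
    rwa [abs_div, abs_of_pos (pow_pos ha n), div_le_iff₀ (pow_pos ha n)] at this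
  calc |f'' (f^[n] x) * iterateDeriv f f' n x ^ 2|
      = |f'' (f^[n] x)| * |iterateDeriv f f' n x| ^ 2 := by rw [abs_mul, abs_pow]
    _ ≤ C * (K * a ^ n) ^ 2 := by gcongr; exact hf'' n x hx
    _ = a ^ (n + 1) * (C * K ^ 2 / a * a ^ n) := by
        field_simp
        ring

end RescaledIterateDeriv

theorem rescaled_iterates_second_deriv_converge_general (a δ C εs : ℝ) (f : ℝ → ℝ)
    (ha0 : 0 < a) (ha1 : a < 1) (hδ : 0 < δ) (hC : 0 < C) (hεs : 0 < εs)
    (hsmall : a * (1 + δ) ^ 2 < 1)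
    (hf : ContDiffOn ℝ 2 f (Set.Icc 0 εs))
    (hf'0 : derivWithin f (Set.Icc 0 εs) 0 = a)
    (hf'' : ∀ x ∈ Set.Icc 0 εs,
      |derivWithin (derivWithin f (Set.Icc 0 εs)) (Set.Icc 0 εs) x| ≤ C)
    (hf1 : ∀ x ∈ Set.Icc 0 εs, 0 ≤ f x ∧ f x ≤ (1 + δ) * a * x)
    (hf2 : ∀ x ∈ Set.Icc 0 εs, |f x - a * x| ≤ C * x ^ 2) :
    ∃ φ ψ : ℝ → ℝ,
      TendstoUniformlyOn (fun n x => f^[n] x / a ^ n) φ Filter.atTop (Set.Icc 0 εs) ∧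
      TendstoUniformlyOn
        (fun n x => derivWithin (derivWithin (fun y => f^[n] y / a ^ n) (Set.Icc 0 εs))
          (Set.Icc 0 εs) x) ψ Filter.atTop (Set.Icc 0 εs) ∧
      ContDiffOn ℝ 2 φ (Set.Icc 0 εs) ∧
      (∀ x ∈ Set.Icc 0 εs,
        derivWithin (derivWithin φ (Set.Icc 0 εs)) (Set.Icc 0 εs) x = ψ x) := by
  set I := Icc (0 : ℝ) εs
  set r := (1 + δ) * a
  have hr0 : 0 ≤ r := by positivity
  have hr1 : r < 1 := by nlinarith
  have hI : UniqueDiffOn ℝ I := uniqueDiffOn_Icc hεs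
  have hmaps : MapsTo f I I := mapsTo_Icc_of_le_mul hr1.le hf1
  obtain ⟨hfd, -, hf'C1⟩ :=
    (contDiffOn_succ_iff_derivWithin hI).1 (show ContDiffOn ℝ (1 + 1) f I from hf)
  obtain ⟨hf'd, hf''c⟩ := (contDiffOn_one_iff_derivWithin hI).1 hf'C1
  have he := abs_apply_iterate_sub_le hC.le hr0 hr1.le hf1 hf'd hf'' hf'0
  have hD1 (n : ℕ) (x : ℝ) (hx : x ∈ I) :=
    (hasDerivWithinAt_iterate_of_mapsTo hmaps (fun y hy => (hfd y hy).hasDerivWithinAt) n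
      hx).div_const (a ^ n)
  have hD2 (n : ℕ) (x : ℝ) (hx : x ∈ I) :=
    (hasDerivWithinAt_iterateDeriv hmaps (fun y hy => (hfd y hy).hasDerivWithinAt)
      (fun y hy => (hf'd y hy).hasDerivWithinAt) n hx).div_const (a ^ n)
  obtain ⟨φ, hφ⟩ := exists_tendstoUniformlyOn_iterate_div_pow ha0 hC.le hr0 hr1.le
    (by nlinarith) hf1 hf2
  obtain ⟨χ, hχ⟩ := exists_tendstoUniformlyOn_iterateDeriv_div_pow ha0 (by positivity) hr0 hr1 he
  obtain ⟨ψ, hψ⟩ := exists_tendstoUniformlyOn_iterateDeriv2_div_pow ha0 ha1 (by positivity)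
    hr0 hr1 hC.le he (fun n x hx => hf'' _ (hmaps.iterate n hx))
  obtain ⟨hφC2, hφ''⟩ := contDiffOn_two_and_derivWithin_derivWithin_eq_of_tendstoUniformlyOn
    hεs hD1 hD2 (fun n => (continuousOn_iterateDeriv2 hmaps hfd.continuousOn hf'd.continuousOn
      hf''c n).div_const _) (fun x hx => hφ.tendsto_at hx) hχ hψ
  refine ⟨φ, ψ, hφ, hψ.congr (.of_forall fun n x hx => ?_), hφC2, hφ''⟩
  exact (derivWithin_derivWithin_eq_of_hasDerivWithinAt hI (hD1 n) (hD2 n) hx).symm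

/-- Under the standing hypotheses, the second derivatives `φₙ″` of the
rescaled iterates `φₙ(x) = f⁽ⁿ⁾(x)/aⁿ` converge uniformly on `[0,ε*]`; consequently the
uniform limit `φ` of `(φₙ)` is twice continuously differentiable on `[0,ε*]` and `φ″` is the
uniform limit of `(φₙ″)`. -/
theorem rescaled_iterates_second_deriv_converge (a δ C εs : ℝ) (f : ℝ → ℝ)
    (ha0 : 0 < a) (ha1 : a < 1) (hδ : 0 < δ) (hC : 0 < C) (hεs : 0 < εs)
    (hsmall : a * (1 + δ) ^ 2 < 1)
    (hf : ContDiffOn ℝ 2 f (Set.Icc 0 εs))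
    (hf0 : f 0 = 0)
    (hf'0 : derivWithin f (Set.Icc 0 εs) 0 = a)
    (hf'' : ∀ x ∈ Set.Icc 0 εs,
      |derivWithin (derivWithin f (Set.Icc 0 εs)) (Set.Icc 0 εs) x| ≤ C)
    (hf1 : ∀ x ∈ Set.Icc 0 εs, 0 ≤ f x ∧ f x ≤ (1 + δ) * a * x)
    (hf2 : ∀ x ∈ Set.Icc 0 εs, |f x - a * x| ≤ C * x ^ 2) :
    ∃ φ ψ : ℝ → ℝ,
      TendstoUniformlyOn (fun n x => f^[n] x / a ^ n) φ Filter.atTop (Set.Icc 0 εs) ∧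
      TendstoUniformlyOn
        (fun n x => derivWithin (derivWithin (fun y => f^[n] y / a ^ n) (Set.Icc 0 εs))
          (Set.Icc 0 εs) x) ψ Filter.atTop (Set.Icc 0 εs) ∧
      ContDiffOn ℝ 2 φ (Set.Icc 0 εs) ∧
      (∀ x ∈ Set.Icc 0 εs,
        derivWithin (derivWithin φ (Set.Icc 0 εs)) (Set.Icc 0 εs) x = ψ x) :=
  rescaled_iterates_second_deriv_converge_general a δ C εs f ha0 ha1 hδ hC hεs hsmall hf hf'0 hf''
    hf1 hf2
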